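/- Let p_M(t,x) = (1/(2M+1)) Σ_{y ∈ B(0,M)} p(t,x+y), where p is the discrete heat kernel. Then for any function u : ℤ → ℝ (with suitable summability), Σ_{z∈ℤ} p_M(t, z-x) u(z) = Σ_{z≥0} (p_M(t,z) - p_M(t,z+1)) (2z+1) ⟨u⟩_{x,z}, where ⟨u⟩_{x,z} = (1/(2z+1)) Σ_{y∈B(x,z)} u(y), and each coefficient p_M(t,z) - p_M(t,z+1) is nonnegative. -/

import Mathlib

/-- Empirical average of `u` over the box `B(x,L) = [x-L, x+L] ∩ ℤ`. -/
noncomputable def boxAvg (u : ℤ → ℝ) (x : ℤ) (L : ℕ) : ℝ :=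
  (∑ y ∈ Finset.Icc (x - (L : ℤ)) (x + (L : ℤ)), u y) / (2 * (L : ℝ) + 1)

/-!
With `s = γ t`, expanding `exp (2 s cos ξ)` in powers of `cos ξ` and using
`∫_{-π}^{π} cos^n ξ cos (k ξ) dξ = 2π · #{±1 walks of length n from 0 to k} / 2^n`
gives `p(t, k) = e^{-2s} I_k(2s)` with `I_k(2s) = ∑_b s^(2b+k) / (b! (b+k)!)`.
By AM-GM the `b`-th term of `I_{k+1}(2s)` is at most the mean of the `b`-th and
`(b+1)`-th terms of `I_k(2s)`, so `I_k(2s)` is nonincreasing in `k`; it also tends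
to `0`. Hence `p(t, ·)` is even and nonincreasing in `|z|`, and the box average
`p_M(t, ·)` is even, nonincreasing on `ℕ` and tends to `0`. The identity is then
summation by parts: `p_M(t, n) = ∑_{k ≥ n} (p_M(t, k) - p_M(t, k+1))`, and exchanging
this series with the finite sum over the support of `u` collects `u` over the
boxes `B(x, k)`.
-/

open Real Filter Topology MeasureTheory Finset
open scoped Nat

noncomputable section

def walkCount (n k : ℕ) : ℝ :=
  if k ≤ n ∧ (n - k) % 2 = 0 then (n.choose ((n - k) / 2) : ℝ) else 0

lemma walkCount_zero (k : ℕ) : walkCount 0 k = if k = 0 then 1 else 0 := by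
  rcases eq_or_ne k 0 with rfl | hk <;> simp [walkCount, *]

lemma walkCount_succ_zero (n : ℕ) : walkCount (n + 1) 0 = 2 * walkCount n 1 := by
  unfold walkCount
  rcases Nat.even_or_odd' n with ⟨m, rfl | rfl⟩
  · rw [if_neg (by omega), if_neg (by omega), mul_zero]
  · rw [if_pos (by omega), if_pos (by omega), show (2 * m + 1 + 1 - 0) / 2 = m + 1 by omega,
      show (2 * m + 1 - 1) / 2 = m by omega, Nat.choose_succ_succ,
      ← Nat.choose_symm_of_eq_add (by omega : 2 * m + 1 = m + (m + 1))]
    push_cast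
    ring

lemma walkCount_succ_succ (n k : ℕ) :
    walkCount (n + 1) (k + 1) = walkCount n (k + 2) + walkCount n k := by
  unfold walkCount
  by_cases hk : k ≤ n ∧ (n - k) % 2 = 0
  · obtain ⟨j, rfl⟩ : ∃ j, n = k + 2 * j := ⟨(n - k) / 2, by omega⟩
    rcases j with _ | j
    · rw [if_pos (by omega), if_neg (by omega), if_pos hk]
      simp
    · rw [if_pos (by omega), if_pos (by omega), if_pos hk,
        show (k + 2 * (j + 1) + 1 - (k + 1)) / 2 = j + 1 by omega,
        show (k + 2 * (j + 1) - (k + 2)) / 2 = j by omega,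
        show (k + 2 * (j + 1) - k) / 2 = j + 1 by omega, Nat.choose_succ_succ]
      push_cast
      ring
  · rw [if_neg (by omega), if_neg (by omega), if_neg hk, add_zero]

lemma walkCount_eq_zero {n k : ℕ} (h : ∀ b, n ≠ 2 * b + k) : walkCount n k = 0 :=
  if_neg fun ⟨h₁, h₂⟩ => h ((n - k) / 2) (by omega)

lemma walkCount_two_mul_add (b k : ℕ) :
    walkCount (2 * b + k) k = ((2 * b + k).choose b : ℝ) := by
  rw [walkCount, if_pos (by omega), show (2 * b + k - k) / 2 = b by omega]

lemma integral_cos_mul_natCast (k : ℕ) :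
    ∫ ξ in Set.Icc (-π) π, cos (ξ * k) = if k = 0 then 2 * π else 0 := by
  rw [integral_Icc_eq_integral_Ioc, ← intervalIntegral.integral_of_le (by linarith [pi_pos])]
  rcases eq_or_ne k 0 with rfl | hk
  · simp; ring
  · have hk' : (k : ℝ) ≠ 0 := Nat.cast_ne_zero.2 hk
    simp_rw [mul_comm _ (k : ℝ)]
    rw [intervalIntegral.integral_comp_mul_left (fun ξ => cos ξ) hk', integral_cos, if_neg hk,
      mul_neg, sin_neg, sin_nat_mul_pi]
    simp

lemma integral_cos_pow_mul_cos (n k : ℕ) :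
    ∫ ξ in Set.Icc (-π) π, cos ξ ^ n * cos (ξ * k) = 2 * π * walkCount n k / 2 ^ n := by
  have hint : ∀ m j : ℕ,
      IntegrableOn (fun ξ => cos ξ ^ m * cos (ξ * j)) (Set.Icc (-π) π) :=
    fun m j => (by fun_prop : Continuous _).integrableOn_Icc
  induction n generalizing k with
  | zero =>
    simp only [pow_zero, one_mul, integral_cos_mul_natCast, walkCount_zero]
    split_ifs <;> simp
  | succ n ih =>
    rcases k with _ | k
    · simp only [pow_succ, Nat.cast_zero, mul_zero, cos_zero, mul_one]
      have := ih 1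
      simp only [Nat.cast_one, mul_one] at this
      rw [this, walkCount_succ_zero]
      field_simp
    · have hcos : ∀ ξ : ℝ, cos ξ ^ (n + 1) * cos (ξ * (k + 1 : ℕ))
          = (cos ξ ^ n * cos (ξ * (k + 2 : ℕ)) + cos ξ ^ n * cos (ξ * k)) / 2 := by
        intro ξ
        have h₁ : ξ * (k + 2 : ℕ) = ξ * (k + 1 : ℕ) + ξ := by push_cast; ring
        have h₂ : ξ * k = ξ * (k + 1 : ℕ) - ξ := by push_cast; ring
        rw [h₁, h₂, cos_add, cos_sub]
        ring
      simp_rw [hcos]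
      rw [integral_div, integral_add (hint n _) (hint n _), ih, ih, walkCount_succ_succ]
      ring

def besselTerm (s : ℝ) (k b : ℕ) : ℝ := s ^ (2 * b + k) / (b ! * (b + k)! : ℝ)

/-- `besselSeries s k = I_k(2s)`, the modified Bessel function. -/
def besselSeries (s : ℝ) (k : ℕ) : ℝ := ∑' b, besselTerm s k b

section
variable {s : ℝ}

lemma besselTerm_nonneg (hs : 0 ≤ s) (k b : ℕ) : 0 ≤ besselTerm s k b := by
  unfold besselTerm; positivity

lemma besselTerm_le (hs : 0 ≤ s) (k b : ℕ) :
    besselTerm s k b ≤ s ^ k / k ! * ((s ^ 2) ^ b / b !) := by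
  have hfac : (k ! * b ! : ℝ) ≤ b ! * (b + k)! := by
    rw [mul_comm]
    exact mul_le_mul_of_nonneg_left (by exact_mod_cast Nat.factorial_le (by omega)) (by positivity)
  calc besselTerm s k b ≤ s ^ (2 * b + k) / (k ! * b ! : ℝ) := by
        unfold besselTerm; gcongr
    _ = s ^ k / k ! * ((s ^ 2) ^ b / b !) := by
        rw [← pow_mul, pow_add, mul_comm 2 b]; ring

lemma summable_besselTerm (hs : 0 ≤ s) (k : ℕ) : Summable (besselTerm s k) :=
  .of_nonneg_of_le (besselTerm_nonneg hs k) (besselTerm_le hs k)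
    ((summable_pow_div_factorial _).mul_left _)

lemma besselSeries_nonneg (hs : 0 ≤ s) (k : ℕ) : 0 ≤ besselSeries s k :=
  tsum_nonneg (besselTerm_nonneg hs k)

lemma besselSeries_le (hs : 0 ≤ s) (k : ℕ) :
    besselSeries s k ≤ s ^ k / k ! * exp (s ^ 2) := by
  rw [exp_eq_exp_ℝ, NormedSpace.exp_eq_tsum_div, ← tsum_mul_left]
  exact (summable_besselTerm hs k).tsum_le_tsum (besselTerm_le hs k)
    ((summable_pow_div_factorial _).mul_left _)

lemma tendsto_besselSeries (hs : 0 ≤ s) : Tendsto (besselSeries s) atTop (𝓝 0) := by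
  refine squeeze_zero (besselSeries_nonneg hs) (besselSeries_le hs) ?_
  simpa using (summable_pow_div_factorial s).tendsto_atTop_zero.mul_const (exp (s ^ 2))

lemma besselTerm_succ_le (hs : 0 ≤ s) (k b : ℕ) :
    besselTerm s (k + 1) b ≤ (besselTerm s k b + besselTerm s k (b + 1)) / 2 := by
  set m : ℝ := b + k + 1
  have hb : (0 : ℝ) < b + 1 := by positivity
  have hbm : (b + 1 : ℝ) ≤ m := by simp [m]
  have hm : 0 < m := hb.trans_le hbm
  have h₁ : besselTerm s (k + 1) b = besselTerm s k b * (s / m) := by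
    simp only [besselTerm, m, show b + (k + 1) = b + k + 1 by ring, Nat.factorial_succ]
    push_cast
    field_simp
    ring
  have h₂ : besselTerm s k (b + 1) = besselTerm s k b * (s ^ 2 / ((b + 1) * m)) := by
    simp only [besselTerm, m, show b + 1 + k = b + k + 1 by ring, Nat.factorial_succ]
    push_cast
    field_simp
    ring
  have key : s / m ≤ (1 + s ^ 2 / ((b + 1) * m)) / 2 := by
    have : (1 + s ^ 2 / ((b + 1) * m)) / 2 - s / m
        = ((b + 1) * m + s ^ 2 - 2 * s * (b + 1)) / (2 * (b + 1) * m) := by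
      field_simp
    rw [← sub_nonneg, this]
    exact div_nonneg (by nlinarith [sq_nonneg (s - (b + 1)), mul_le_mul_of_nonneg_left hbm hb.le])
      (by positivity)
  rw [h₁, h₂]
  linarith [mul_le_mul_of_nonneg_left key (besselTerm_nonneg hs k b)]

lemma besselSeries_succ_le (hs : 0 ≤ s) (k : ℕ) :
    besselSeries s (k + 1) ≤ besselSeries s k := by
  have h := summable_besselTerm hs k
  have h' : Summable fun b => besselTerm s k (b + 1) := (summable_nat_add_iff 1).2 h
  calc besselSeries s (k + 1) ≤ ∑' b, (besselTerm s k b + besselTerm s k (b + 1)) / 2 :=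
        (summable_besselTerm hs _).tsum_le_tsum (besselTerm_succ_le hs k) ((h.add h').div_const 2)
    _ = (besselSeries s k + (besselSeries s k - besselTerm s k 0)) / 2 := by
        rw [tsum_div_const, h.tsum_add h', besselSeries, h.tsum_eq_zero_add]; ring
    _ ≤ besselSeries s k := by linarith [besselTerm_nonneg hs k 0]

lemma antitone_besselSeries (hs : 0 ≤ s) : Antitone (besselSeries s) :=
  antitone_nat_of_succ_le (besselSeries_succ_le hs)

end

lemma Function.Even.apply_natAbs {α : Type*} {g : ℤ → α} (hg : g.Even) (z : ℤ) :
    g z.natAbs = g z := by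
  rw [Int.natCast_natAbs]
  rcases abs_choice z with h | h <;> rw [h]
  exact hg z

def heatKernel (s : ℝ) (z : ℤ) : ℝ :=
  1 / (2 * π) * ∫ ξ in Set.Icc (-π) π, exp (-(2 * (1 - cos ξ)) * s) * cos (ξ * z)

lemma tsum_pow_div_factorial_mul_walkCount (s : ℝ) (k : ℕ) :
    ∑' n, s ^ n / n ! * walkCount n k = besselSeries s k := by
  have hinj : Function.Injective fun b => 2 * b + k := fun a b h => by simp only at h; omega
  rw [← hinj.tsum_eq fun n hn => ?_]
  · refine tsum_congr fun b => ?_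
    have hfac := Nat.choose_mul_factorial_mul_factorial (show b ≤ 2 * b + k by omega)
    rw [show 2 * b + k - b = b + k by omega] at hfac
    have hchoose : ((2 * b + k).choose b : ℝ) ≠ 0 :=
      Nat.cast_ne_zero.2 (Nat.choose_pos (by omega)).ne'
    rw [walkCount_two_mul_add, besselTerm, ← hfac]
    push_cast
    field_simp
  · by_contra h
    exact hn (by simp only; rw [walkCount_eq_zero fun b hb => h ⟨b, hb.symm⟩, mul_zero])

lemma heatKernel_natCast (s : ℝ) (k : ℕ) :
    heatKernel s k = exp (-(2 * s)) * besselSeries s k := by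
  have hexp : ∀ ξ : ℝ, HasSum
      (fun n => exp (-(2 * s)) * ((2 * s) ^ n / n !) * (cos ξ ^ n * cos (ξ * k)))
      (exp (-(2 * (1 - cos ξ)) * s) * cos (ξ * k)) := by
    intro ξ
    have := ((NormedSpace.expSeries_div_hasSum_exp (2 * s * cos ξ)).mul_left
      (exp (-(2 * s)))).mul_right (cos (ξ * k))
    rw [← exp_eq_exp_ℝ, ← exp_add,
      show -(2 * s) + 2 * s * cos ξ = -(2 * (1 - cos ξ)) * s by ring] at this
    exact this.congr_fun fun n => by rw [mul_pow]; ring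
  have hbound : ∀ (n : ℕ) (ξ : ℝ),
      ‖exp (-(2 * s)) * ((2 * s) ^ n / n !) * (cos ξ ^ n * cos (ξ * k))‖
        ≤ |exp (-(2 * s)) * ((2 * s) ^ n / n !)| := by
    intro n ξ
    rw [norm_mul, Real.norm_eq_abs]
    refine mul_le_of_le_one_right (abs_nonneg _) ?_
    rw [norm_mul, norm_pow, Real.norm_eq_abs, Real.norm_eq_abs]
    exact mul_le_one₀ (pow_le_one₀ (abs_nonneg _) (abs_cos_le_one _)) (abs_nonneg _)
      (abs_cos_le_one _)
  have hint := hasSum_integral_of_dominated_convergence (μ := volume.restrict (Set.Icc (-π) π))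
    _ (fun n => (by fun_prop : Continuous _).aestronglyMeasurable)
    (fun n => ae_of_all _ (hbound n))
    (ae_of_all _ fun _ => ((summable_pow_div_factorial _).mul_left _).abs)
    (integrable_const _) (ae_of_all _ hexp)
  simp_rw [integral_const_mul, integral_cos_pow_mul_cos] at hint
  rw [heatKernel, Int.cast_natCast, ← hint.tsum_eq, ← tsum_pow_div_factorial_mul_walkCount,
    ← tsum_mul_left, ← tsum_mul_left]
  refine tsum_congr fun n => ?_
  field_simp
  ring

lemma heatKernel_even (s : ℝ) : (heatKernel s).Even := fun z => by
  simp only [heatKernel, Int.cast_neg, mul_neg, cos_neg]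

lemma heatKernel_eq_besselSeries (s : ℝ) (z : ℤ) :
    heatKernel s z = exp (-(2 * s)) * besselSeries s z.natAbs := by
  rw [← heatKernel_natCast, (heatKernel_even s).apply_natAbs]

lemma heatKernel_le_of_natAbs_le {s : ℝ} (hs : 0 ≤ s) {a b : ℤ} (h : a.natAbs ≤ b.natAbs) :
    heatKernel s b ≤ heatKernel s a := by
  rw [heatKernel_eq_besselSeries, heatKernel_eq_besselSeries]
  exact mul_le_mul_of_nonneg_left (antitone_besselSeries hs h) (exp_pos _).le

lemma tendsto_heatKernel {s : ℝ} (hs : 0 ≤ s) : Tendsto (heatKernel s) atTop (𝓝 0) := by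
  have hnat : Tendsto Int.natAbs atTop atTop :=
    tendsto_atTop.2 fun n => (eventually_ge_atTop (n : ℤ)).mono fun z hz => by omega
  simp_rw [funext (heatKernel_eq_besselSeries s)]
  simpa [Function.comp_def] using ((tendsto_besselSeries hs).const_mul (exp (-(2 * s)))).comp hnat

end

lemma boxAvg_eq_sum_add (f : ℤ → ℝ) (x : ℤ) (L : ℕ) :
    boxAvg f x L = (∑ y ∈ Icc (-(L : ℤ)) L, f (x + y)) / (2 * L + 1) := by
  rw [boxAvg, sub_eq_add_neg, ← map_add_left_Icc, sum_map]
  rfl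

lemma two_mul_add_one_mul_boxAvg (u : ℤ → ℝ) (x : ℤ) (L : ℕ) :
    (2 * L + 1) * boxAvg u x L = ∑ y ∈ Icc (x - L) (x + L), u y :=
  mul_div_cancel₀ _ (by positivity)

lemma boxAvg_even {f : ℤ → ℝ} (hf : f.Even) (L : ℕ) :
    Function.Even fun x => boxAvg f x L := by
  intro x
  show boxAvg f (-x) L = boxAvg f x L
  rw [boxAvg, boxAvg]
  congr 1
  exact sum_nbij' Neg.neg Neg.neg (by intro y; simp; omega) (by intro y; simp; omega)
    (by simp) (by simp) fun y _ => (hf y).symm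

lemma boxAvg_add_one_le {f : ℤ → ℝ} {x : ℤ} {L : ℕ} (h : f (x + L + 1) ≤ f (x - L)) :
    boxAvg f (x + 1) L ≤ boxAvg f x L := by
  have h₁ := sum_insert (f := f) (s := Icc (x - L + 1) (x + L + 1)) (a := x - L) (by simp)
  have h₂ := sum_insert (f := f) (s := Icc (x - L) (x + L)) (a := x + L + 1) (by simp)
  rw [insert_Icc_add_one_left_eq_Icc (by omega)] at h₁
  rw [insert_Icc_right_eq_Icc_add_one (by omega)] at h₂
  rw [boxAvg, boxAvg, show x + 1 - L = x - L + 1 by ring, add_right_comm x 1]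
  gcongr ?_ / _
  linarith

lemma tendsto_boxAvg {f : ℤ → ℝ} (hf : Tendsto f atTop (𝓝 0)) (L : ℕ) :
    Tendsto (fun x => boxAvg f x L) atTop (𝓝 0) := by
  simp_rw [boxAvg_eq_sum_add]
  simpa using (tendsto_finsetSum _ fun y _ =>
    hf.comp (tendsto_atTop_add_const_right _ y tendsto_id)).div_const (2 * L + 1 : ℝ)

lemma Antitone.hasSum_ite_sub_succ {f : ℕ → ℝ} (hf : Antitone f) (hf0 : Tendsto f atTop (𝓝 0))
    (n : ℕ) :
    HasSum (fun k => if n ≤ k then f k - f (k + 1) else 0) (f n) := by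
  have htel : HasSum (fun k => f (k + n) - f (k + 1 + n)) (f n) := by
    rw [hasSum_iff_tendsto_nat_of_nonneg fun k => sub_nonneg.2 (hf (by omega)),
      funext (sum_range_sub' (fun k => f (k + n)))]
    simpa using tendsto_const_nhds.sub (hf0.comp (tendsto_add_atTop_nat n))
  rw [← (add_left_injective n).hasSum_iff fun k hk => if_neg fun h => hk ⟨k - n, by simp; omega⟩]
  exact htel.congr_fun fun k => by simp [add_right_comm k 1 n]

theorem tsum_comp_natAbs_sub_mul_eq_tsum_sub_succ_mul_sum_Icc {f : ℕ → ℝ} (hf : Antitone f)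
    (hf0 : Tendsto f atTop (𝓝 0)) {u : ℤ → ℝ} (hu : u.support.Finite) (x : ℤ) :
    ∑' z, f (z - x).natAbs * u z
      = ∑' k : ℕ, (f k - f (k + 1)) * ∑ y ∈ Icc (x - k) (x + k), u y := by
  set T := hu.toFinset
  have hbox : ∀ k : ℕ, ∑ y ∈ Icc (x - k) (x + k), u y = ∑ z ∈ T with (z - x).natAbs ≤ k, u z := by
    intro k
    refine (sum_subset (fun z hz => ?_) fun z _ hz => ?_).symm
    · simp at hz ⊢; omega
    · by_contra hu0
      exact hz (mem_filter.2 ⟨hu.mem_toFinset.2 hu0, by simp at *; omega⟩)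
  have hsum := hasSum_sum fun z (_ : z ∈ T) =>
    (hf.hasSum_ite_sub_succ hf0 (z - x).natAbs).mul_right (u z)
  rw [tsum_eq_sum (s := T) fun z hz => by simp [T] at hz; simp [hz], ← hsum.tsum_eq]
  refine tsum_congr fun k => ?_
  rw [hbox, mul_sum, sum_filter]
  exact sum_congr rfl fun z _ => by split_ifs <;> simp

theorem plateau_decomposition (γ : ℝ) (hγ : 0 < γ) (p : ℝ → ℤ → ℝ)
    (hp : ∀ (t : ℝ) (z : ℤ), p t z =
      (1 / (2 * Real.pi)) * ∫ ξ in Set.Icc (-Real.pi) Real.pi,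
        Real.exp (-(2 * (1 - Real.cos ξ)) * γ * t) * Real.cos (ξ * (z : ℝ)))
    (M : ℕ) (pM : ℝ → ℤ → ℝ)
    (hpM : ∀ (t : ℝ) (z : ℤ), pM t z =
      (∑ y ∈ Finset.Icc (-(M : ℤ)) (M : ℤ), p t (z + y)) / (2 * (M : ℝ) + 1))
    (u : ℤ → ℝ) (hu : (Function.support u).Finite)
    (t : ℝ) (ht : 0 ≤ t) (x : ℤ) :
    ((∑' z : ℤ, pM t (z - x) * u z)
        = ∑' z : ℕ, (pM t (z : ℤ) - pM t ((z : ℤ) + 1)) * (2 * (z : ℝ) + 1) * boxAvg u x z)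
    ∧ ∀ z : ℕ, 0 ≤ pM t (z : ℤ) - pM t ((z : ℤ) + 1) := by
  have hs : 0 ≤ γ * t := mul_nonneg hγ.le ht
  have hpt : p t = heatKernel (γ * t) := funext fun z => by simp only [hp, heatKernel, mul_assoc]
  have hpMt : pM t = fun z => boxAvg (heatKernel (γ * t)) z M :=
    funext fun z => by rw [hpM, boxAvg_eq_sum_add, hpt]
  have hanti : Antitone fun k : ℕ => pM t k := antitone_nat_of_succ_le fun k => by
    simpa only [hpMt, Nat.cast_succ] using
      boxAvg_add_one_le (heatKernel_le_of_natAbs_le hs (by omega))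
  have hlim : Tendsto (fun k : ℕ => pM t k) atTop (𝓝 0) := by
    rw [hpMt]
    exact (tendsto_boxAvg (tendsto_heatKernel hs) M).comp tendsto_natCast_atTop_atTop
  have heven : ∀ z : ℤ, pM t z = pM t z.natAbs := fun z => by
    rw [hpMt]
    exact ((boxAvg_even (heatKernel_even _) M).apply_natAbs z).symm
  refine ⟨?_, fun z => sub_nonneg.2 (by exact_mod_cast hanti z.le_succ)⟩
  simp_rw [heven (_ - x), mul_assoc, two_mul_add_one_mul_boxAvg]
  exact_mod_cast tsum_comp_natAbs_sub_mul_eq_tsum_sub_succ_mul_sum_Icc hanti hlim hu x
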